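/- Suppose (x*, r_c*, r_d*, SOC*) is a global minimizer of the period-2 problem P2, i.e., it minimizes C_o(Q) + Σ_{i=1}^N C_i(x_i) over all (x_1,...,x_N, r_c, r_d, SOC) satisfying x_i ∈ X_i for every user i, the storage constraints, and Q_t = b_t + Σ_{i=1}^N x_{i,t} + r_{c,t} − r_{d,t} for every t. Define the day-ahead prices p_t = 2·β_o·max(Q*_t − r_t^max, 0) for each time slot t, where Q* is the aggregate supply at the optimum. Then for every user i, the consumption x_i* is a global minimizer of the user's total cost Σ_{t=1}^T p_t·x_t + C_i(x) over x ∈ X_i. (Theorem 1: the pricing scheme p induces the socially optimal power consumption.) -/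

import Mathlib

/-!
Move user `i` from `x*ᵢ` towards any `x ∈ Xᵢ` along the segment `x*ᵢ + ε (x - x*ᵢ)`,
`0 < ε ≤ 1`, keeping the other users and the storage schedule fixed; by convexity of `Xᵢ` this
stays feasible, and the aggregate supply moves by the same amount. Since `u ↦ max(u, 0)²` has
derivative `2 max(u, 0)` with Lipschitz constant `2`, the social cost rises by at most
`ε ⟨p + ∇Cᵢ(x*ᵢ), x - x*ᵢ⟩ + O(ε²)`, so optimality forces the first-order term to be
nonnegative. The user's own cost is `⟨p, ·⟩ + Cᵢ` with `Cᵢ` a convex quadratic, so this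
first-order condition makes `x*ᵢ` its minimiser.
-/

noncomputable section

/-- Operator's cost `C_o(Q) = β_o · Σ_t (max(Q_t − r_t^max, 0))²`. -/
def Co (T : ℕ) (βo : ℝ) (rmax Q : Fin T → ℝ) : ℝ :=
  βo * ∑ t, (max (Q t - rmax t) 0) ^ 2

/-- User's discomfort cost `C_i(x) = β_i · Σ_t (x_t − y_{i,t})²`. -/
def Ci (T : ℕ) (βi : ℝ) (y x : Fin T → ℝ) : ℝ :=
  βi * ∑ t, (x t - y t) ^ 2

/-- A user's feasible set `X_i`. -/
def userFeas (T : ℕ) (dlo dhi : Fin T → ℝ) (Dtot : ℝ) : Set (Fin T → ℝ) :=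
  {x | (∀ t, dlo t ≤ x t ∧ x t ≤ dhi t) ∧ ∑ t, x t = Dtot}

/-- The storage constraints (5)-(9). -/
def storageFeas (T : ℕ) (αe ηc ηd rcmax rdmax SOCmin SOCmax : ℝ)
    (rc rd : Fin T → ℝ) (SOC : Fin (T + 1) → ℝ) : Prop :=
  (∀ t, 0 ≤ rc t ∧ rc t ≤ αe * rcmax) ∧
  (∀ t, 0 ≤ rd t ∧ rd t ≤ αe * rdmax) ∧
  (∀ t : Fin T, SOC t.succ = SOC t.castSucc + ηc * rc t / αe - rd t / (ηd * αe)) ∧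
  (∀ t : Fin (T + 1), SOCmin ≤ SOC t ∧ SOC t ≤ SOCmax) ∧
  SOC 0 = SOC (Fin.last T)

open Filter Topology Finset

theorem max_add_sq_le (a h : ℝ) :
    max (a + h) 0 ^ 2 ≤ max a 0 ^ 2 + 2 * max a 0 * h + h ^ 2 := by
  rcases le_total a 0 with ha | ha <;> rcases le_total (a + h) 0 with hah | hah <;>
    simp only [max_eq_left, max_eq_right, ha, hah] <;> nlinarith

theorem Co_add_smul_le {T : ℕ} {βo : ℝ} (hβo : 0 ≤ βo) (rmax Q d : Fin T → ℝ) (ε : ℝ) :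
    Co T βo rmax (Q + ε • d) ≤ Co T βo rmax Q +
      ε * ∑ t, 2 * βo * max (Q t - rmax t) 0 * d t + ε ^ 2 * (βo * ∑ t, d t ^ 2) := by
  simp only [Co, mul_sum, ← sum_add_distrib]
  gcongr with t
  have h := mul_le_mul_of_nonneg_left (max_add_sq_le (Q t - rmax t) (ε * d t)) hβo
  simp only [Pi.add_apply, Pi.smul_apply, smul_eq_mul, add_sub_right_comm] at h ⊢
  linarith

theorem Ci_add_smul (T : ℕ) (β : ℝ) (y x d : Fin T → ℝ) (ε : ℝ) :
    Ci T β y (x + ε • d) = Ci T β y x +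
      ε * (2 * β * ∑ t, (x t - y t) * d t) + ε ^ 2 * (β * ∑ t, d t ^ 2) := by
  simp only [Ci, mul_sum, ← sum_add_distrib]
  exact sum_congr rfl fun t _ => by simp only [Pi.add_apply, Pi.smul_apply, smul_eq_mul]; ring

theorem convex_userFeas (T : ℕ) (dlo dhi : Fin T → ℝ) (Dtot : ℝ) :
    Convex ℝ (userFeas T dlo dhi Dtot) := by
  have hsum : IsLinearMap ℝ fun x : Fin T → ℝ => ∑ t, x t :=
    ⟨fun _ _ => sum_add_distrib, fun _ _ => (mul_sum ..).symm⟩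
  have : userFeas T dlo dhi Dtot = Set.Icc dlo dhi ∩ {x | ∑ t, x t = Dtot} := by
    ext x
    simp [userFeas, Pi.le_def, forall_and]
  rw [this]
  exact (convex_Icc dlo dhi).inter (convex_hyperplane hsum Dtot)

theorem nonneg_of_forall_mul_add_sq_mul_nonneg {A K : ℝ}
    (h : ∀ ε ∈ Set.Ioc (0 : ℝ) 1, 0 ≤ ε * A + ε ^ 2 * K) : 0 ≤ A := by
  have hlim : Tendsto (fun ε => A + ε * K) (𝓝[>] 0) (𝓝 A) := by
    have hcont : Continuous fun ε : ℝ => A + ε * K := by fun_prop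
    simpa using (hcont.tendsto 0).mono_left nhdsWithin_le_nhds
  refine ge_of_tendsto hlim (eventually_of_mem (Ioc_mem_nhdsGT one_pos) fun ε hε => ?_)
  rw [← mul_nonneg_iff_of_pos_left hε.1]
  linarith [h ε hε]

theorem sum_update_eq_sum_add_sub {ι M : Type*} [Fintype ι] [DecidableEq ι] [AddCommGroup M]
    (f : ι → M) (i : ι) (b : M) : ∑ j, Function.update f i b j = ∑ j, f j + (b - f i) := by
  rw [sum_update_of_mem (mem_univ i), ← add_sum_erase univ f (mem_univ i), sdiff_singleton_eq_erase]
  abel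

theorem Co_add_Ci_le_of_isSocialOptimum {T N : ℕ} {βo : ℝ} {rmax b rc rd Qstar : Fin T → ℝ}
    {β : Fin N → ℝ} {y dlo dhi : Fin N → Fin T → ℝ} {Dtot : Fin N → ℝ}
    {xstar : Fin N → Fin T → ℝ}
    (hQstar : ∀ t, Qstar t = b t + (∑ i, xstar i t) + rc t - rd t)
    (hopt : ∀ x : Fin N → Fin T → ℝ, (∀ i, x i ∈ userFeas T (dlo i) (dhi i) (Dtot i)) →
      Co T βo rmax Qstar + ∑ i, Ci T (β i) (y i) (xstar i) ≤
        Co T βo rmax (fun t => b t + (∑ i, x i t) + rc t - rd t) + ∑ i, Ci T (β i) (y i) (x i))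
    (hxfeas : ∀ i, xstar i ∈ userFeas T (dlo i) (dhi i) (Dtot i))
    {i : Fin N} {z : Fin T → ℝ} (hz : z ∈ userFeas T (dlo i) (dhi i) (Dtot i)) :
    Co T βo rmax Qstar + Ci T (β i) (y i) (xstar i) ≤
      Co T βo rmax (Qstar + (z - xstar i)) + Ci T (β i) (y i) z := by
  have h := hopt (Function.update xstar i z)
    ((Function.forall_update_iff _ fun j w => w ∈ _).2 ⟨hz, fun j _ => hxfeas j⟩)
  have hQ : (fun t => b t + (∑ j, Function.update xstar i z j t) + rc t - rd t) =
      Qstar + (z - xstar i) := by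
    ext t
    simp only [← Finset.sum_apply, sum_update_eq_sum_add_sub, hQstar, Pi.add_apply, Pi.sub_apply]
    ring
  simp only [hQ, Function.apply_update (fun j => Ci T (β j) (y j)),
    sum_update_eq_sum_add_sub] at h
  linarith

theorem optimal_pricing_induces_social_optimum_general
    (T N : ℕ)
    (βo : ℝ) (hβo : 0 ≤ βo)
    (αe : ℝ)
    (ηc ηd : ℝ)
    (rcmax rdmax : ℝ)
    (SOCmin SOCmax : ℝ)
    (b : Fin T → ℝ)
    (β : Fin N → ℝ) (hβ : ∀ i, 0 ≤ β i)
    (y : Fin N → Fin T → ℝ)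
    (dlo dhi : Fin N → Fin T → ℝ) (Dtot : Fin N → ℝ)
    (rmax : Fin T → ℝ)
    (xstar : Fin N → Fin T → ℝ) (rcstar rdstar : Fin T → ℝ)
    (SOCstar : Fin (T + 1) → ℝ)
    (hxfeas : ∀ i, xstar i ∈ userFeas T (dlo i) (dhi i) (Dtot i))
    (hstor : storageFeas T αe ηc ηd rcmax rdmax SOCmin SOCmax rcstar rdstar SOCstar)
    (Qstar : Fin T → ℝ)
    (hQstar : ∀ t, Qstar t = b t + (∑ i, xstar i t) + rcstar t - rdstar t)
    (hopt : ∀ (x : Fin N → Fin T → ℝ) (rc rd : Fin T → ℝ) (SOC : Fin (T + 1) → ℝ),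
      (∀ i, x i ∈ userFeas T (dlo i) (dhi i) (Dtot i)) →
      storageFeas T αe ηc ηd rcmax rdmax SOCmin SOCmax rc rd SOC →
      Co T βo rmax Qstar + ∑ i, Ci T (β i) (y i) (xstar i) ≤
        Co T βo rmax (fun t => b t + (∑ i, x i t) + rc t - rd t) +
          ∑ i, Ci T (β i) (y i) (x i))
    (p : Fin T → ℝ) (hp : ∀ t, p t = 2 * βo * max (Qstar t - rmax t) 0) :
    ∀ i, ∀ x ∈ userFeas T (dlo i) (dhi i) (Dtot i),
      (∑ t, p t * xstar i t) + Ci T (β i) (y i) (xstar i) ≤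
        (∑ t, p t * x t) + Ci T (β i) (y i) x := by
  intro i x hx
  set d := x - xstar i
  have hfirst_order : 0 ≤ ∑ t, p t * d t + 2 * β i * ∑ t, (xstar i t - y i t) * d t := by
    refine nonneg_of_forall_mul_add_sq_mul_nonneg (K := βo * ∑ t, d t ^ 2 + β i * ∑ t, d t ^ 2)
      fun ε hε => ?_
    have hdev := Co_add_Ci_le_of_isSocialOptimum hQstar
      (fun x hx => hopt x rcstar rdstar SOCstar hx hstor) hxfeas
      ((convex_userFeas ..).add_smul_sub_mem (hxfeas i) hx ⟨hε.1.le, hε.2⟩)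
    have hCo := Co_add_smul_le hβo rmax Qstar d ε
    simp only [← hp] at hCo
    rw [add_sub_cancel_left, Ci_add_smul] at hdev
    linarith
  have hx_eq : x = xstar i + (1 : ℝ) • d := by rw [one_smul, add_sub_cancel]
  have hpd : ∑ t, p t * d t = ∑ t, p t * x t - ∑ t, p t * xstar i t := by
    simp only [d, Pi.sub_apply, mul_sub, sum_sub_distrib]
  have hquad : 0 ≤ β i * ∑ t, d t ^ 2 := mul_nonneg (hβ i) (sum_nonneg fun t _ => sq_nonneg _)
  rw [hx_eq, Ci_add_smul, ← hx_eq]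
  linarith

/-- Theorem 1: the day-ahead prices `p_t = 2 β_o max(Q*_t − r_t^max, 0)` induce the
socially optimal power consumption: each user's socially optimal consumption `x_i*`
globally minimizes that user's own total cost `Σ_t p_t x_t + C_i(x)` over `X_i`. -/
theorem optimal_pricing_induces_social_optimum
    (T N : ℕ) (hT : 1 ≤ T) (hN : 1 ≤ N)
    (βo : ℝ) (hβo : 0 ≤ βo)
    (ηs ηw : Fin T → ℝ) (hηs : ∀ t, 0 ≤ ηs t) (hηw : ∀ t, 0 ≤ ηw t)
    (αs αw : ℝ) (hαs : 0 ≤ αs) (hαw : 0 ≤ αw)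
    (αe : ℝ) (hαe : 0 < αe)
    (ηc ηd : ℝ) (hηc : ηc ∈ Set.Icc (0 : ℝ) 1) (hηd : ηd ∈ Set.Ioc (0 : ℝ) 1)
    (rcmax rdmax : ℝ) (hrcmax : 0 < rcmax) (hrdmax : 0 < rdmax)
    (SOCmin SOCmax : ℝ) (hSOCb : SOCmin ≤ SOCmax)
    (b : Fin T → ℝ)
    (β : Fin N → ℝ) (hβ : ∀ i, 0 ≤ β i)
    (y : Fin N → Fin T → ℝ)
    (dlo dhi : Fin N → Fin T → ℝ) (Dtot : Fin N → ℝ)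
    (rmax : Fin T → ℝ) (hrmax : ∀ t, rmax t = ηs t * αs + ηw t * αw)
    (xstar : Fin N → Fin T → ℝ) (rcstar rdstar : Fin T → ℝ)
    (SOCstar : Fin (T + 1) → ℝ)
    (hxfeas : ∀ i, xstar i ∈ userFeas T (dlo i) (dhi i) (Dtot i))
    (hstor : storageFeas T αe ηc ηd rcmax rdmax SOCmin SOCmax rcstar rdstar SOCstar)
    (Qstar : Fin T → ℝ)
    (hQstar : ∀ t, Qstar t = b t + (∑ i, xstar i t) + rcstar t - rdstar t)
    (hopt : ∀ (x : Fin N → Fin T → ℝ) (rc rd : Fin T → ℝ) (SOC : Fin (T + 1) → ℝ),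
      (∀ i, x i ∈ userFeas T (dlo i) (dhi i) (Dtot i)) →
      storageFeas T αe ηc ηd rcmax rdmax SOCmin SOCmax rc rd SOC →
      Co T βo rmax Qstar + ∑ i, Ci T (β i) (y i) (xstar i) ≤
        Co T βo rmax (fun t => b t + (∑ i, x i t) + rc t - rd t) +
          ∑ i, Ci T (β i) (y i) (x i))
    (p : Fin T → ℝ) (hp : ∀ t, p t = 2 * βo * max (Qstar t - rmax t) 0) :
    ∀ i, ∀ x ∈ userFeas T (dlo i) (dhi i) (Dtot i),
      (∑ t, p t * xstar i t) + Ci T (β i) (y i) (xstar i) ≤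
        (∑ t, p t * x t) + Ci T (β i) (y i) x :=
  optimal_pricing_induces_social_optimum_general T N βo hβo αe ηc ηd rcmax rdmax SOCmin SOCmax b β
    hβ y dlo dhi Dtot rmax xstar rcstar rdstar SOCstar hxfeas hstor Qstar hQstar hopt p hp
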